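/- Let S be a completely regular semigroup that is a band of rectangular groups with tr β ⊆ tr τ (the trace of the least band congruence contained in the trace of the greatest idempotent pure congruence). Then β ∩ F = β ∩ τ. -/
import Mathlib


/-- A completely regular semigroup: a semigroup with a unary inversion such that
every element lies in a subgroup; `a⁻¹` is the group inverse of `a` in its maximal
subgroup and `a * a⁻¹` is the identity of that subgroup. -/
class CompletelyRegularSemigroup (S : Type*) extends Semigroup S, Inv S where
  mul_inv_mul (a : S) : a * a⁻¹ * a = a
  inv_mul_inv (a : S) : a⁻¹ * a * a⁻¹ = a⁻¹
  mul_inv_comm (a : S) : a * a⁻¹ = a⁻¹ * a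

variable {S : Type*} [CompletelyRegularSemigroup S]

/-- Green's relation `H` on a completely regular semigroup: `a H b` iff
`a` and `b` lie in the same maximal subgroup, i.e. `a⁰ = b⁰`. -/
def hRel (a b : S) : Prop := a * a⁻¹ = b * b⁻¹

/-- The relation `Θ`: `a Θ b` iff `a⁰ * b = a * b⁰`. -/
def thetaRel (a b : S) : Prop := (a * a⁻¹) * b = a * (b * b⁻¹)

/-- The relation `F`: `a F b` iff `a * b⁻¹` is idempotent. -/
def fRel (a b : S) : Prop := IsIdempotentElem (a * b⁻¹)

/-- The kernel of a congruence: the union of the congruence classes of idempotents. -/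
def conKer (c : Con S) : Set S := {a | ∃ e : S, IsIdempotentElem e ∧ c a e}


open CompletelyRegularSemigroup

lemma cr_idem (a : S) : IsIdempotentElem (a * a⁻¹) := by
  show a * a⁻¹ * (a * a⁻¹) = a * a⁻¹
  rw [← mul_assoc, mul_inv_mul]

lemma cr_absorb_right (a : S) : a * (a * a⁻¹) = a := by
  rw [mul_inv_comm, ← mul_assoc, mul_inv_mul]

lemma cr_absorb_left (a : S) : (a * a⁻¹) * a = a := mul_inv_mul a

lemma beta_zero (β : Con S) (hband : ∀ a : S, β (a * a) a) (a : S) :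
    β a (a * a⁻¹) := by
  have h := β.mul (hband a) (β.refl a⁻¹)
  rwa [mul_assoc, cr_absorb_right] at h

/-- If `S` is a band of rectangular groups with `tr β ⊆ tr τ` (where `β` is the least
band congruence and `τ` the greatest idempotent pure congruence), then
`β ∩ F = β ∩ τ`. -/
theorem beta_inter_fRel_eq_beta_inter_tau (β τ : Con S)
    (hband : ∀ a : S, β (a * a) a)
    (hbleast : ∀ θ : Con S, (∀ a : S, θ (a * a) a) → β ≤ θ)
    (hτpure : ∀ a e : S, IsIdempotentElem e → τ a e → IsIdempotentElem a)
    (hτgreatest : ∀ θ : Con S,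
      (∀ a e : S, IsIdempotentElem e → θ a e → IsIdempotentElem a) → θ ≤ τ)
    (hrg : ∀ e f g : S, IsIdempotentElem e → IsIdempotentElem f → IsIdempotentElem g →
      β f e → β g e → IsIdempotentElem (f * g) ∧ f * g * f = f)
    (htr : ∀ e f : S, IsIdempotentElem e → IsIdempotentElem f → β e f → τ e f) :
    ∀ a b : S, (β a b ∧ fRel a b) ↔ (β a b ∧ τ a b) := by
  intro a b
  constructor
  · rintro ⟨hβ, hF⟩
    refine ⟨hβ, ?_⟩
    have hβ0 : β (a * a⁻¹) (b * b⁻¹) :=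
      β.trans (β.symm (beta_zero β hband a)) (β.trans hβ (beta_zero β hband b))
    have hβh : β (a * b⁻¹) (b * b⁻¹) := β.mul hβ (β.refl b⁻¹)
    have hβha : β (a * b⁻¹) (a * a⁻¹) := β.trans hβh (β.symm hβ0)
    have hτ0 : τ (a * a⁻¹) (b * b⁻¹) := htr _ _ (cr_idem a) (cr_idem b) hβ0
    have hF' : IsIdempotentElem (a * b⁻¹) := hF
    -- rectangular band facts among idempotents a⁰, b⁰, h := a*b⁻¹ in the β-class of a⁰
    have hβx : β ((a * a⁻¹) * (b * b⁻¹)) (a * a⁻¹) := by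
      have := β.mul (β.refl (a * a⁻¹)) (β.symm hβ0)
      rwa [cr_idem a] at this
    have hx := hrg (a * a⁻¹) (a * a⁻¹) (b * b⁻¹) (cr_idem a) (cr_idem a) (cr_idem b)
      (β.refl _) (β.symm hβ0)
    have hb0 := (hrg (a * a⁻¹) (b * b⁻¹) (a * b⁻¹) (cr_idem a) (cr_idem b) hF'
      (β.symm hβ0) hβha).2
    have ha0 := (hrg (a * a⁻¹) (a * a⁻¹) (a * b⁻¹) (cr_idem a) (cr_idem a) hF'
      (β.refl _) hβha).2
    have hxh := (hrg (a * a⁻¹) (a * b⁻¹) ((a * a⁻¹) * (b * b⁻¹)) (cr_idem a) hF'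
      hx.1 hβha hβx).2
    -- basic identities
    have id1 : (a * a⁻¹) * (a * b⁻¹) = a * b⁻¹ := by
      rw [← mul_assoc, mul_inv_mul]
    have id2 : (a * b⁻¹) * (b * b⁻¹) = a * b⁻¹ := by
      rw [mul_assoc, ← mul_assoc b⁻¹ b b⁻¹, inv_mul_inv]
    have d1 : (b * b⁻¹) * (a * b⁻¹) = b * b⁻¹ := by
      calc (b * b⁻¹) * (a * b⁻¹) = (b * b⁻¹) * ((a * b⁻¹) * (b * b⁻¹)) := by rw [id2]
        _ = (b * b⁻¹) * (a * b⁻¹) * (b * b⁻¹) := (mul_assoc _ _ _).symm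
        _ = b * b⁻¹ := hb0
    have d2 : (a * b⁻¹) * (a * a⁻¹) = a * a⁻¹ := by
      calc (a * b⁻¹) * (a * a⁻¹) = ((a * a⁻¹) * (a * b⁻¹)) * (a * a⁻¹) := by rw [id1]
        _ = a * a⁻¹ := ha0
    have xh : ((a * a⁻¹) * (b * b⁻¹)) * (a * b⁻¹) = (a * a⁻¹) * (b * b⁻¹) := by
      rw [mul_assoc, d1]
    have hx2 : (a * b⁻¹) * ((a * a⁻¹) * (b * b⁻¹)) = (a * a⁻¹) * (b * b⁻¹) := by
      rw [← mul_assoc, d2]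
    have keyx : (a * a⁻¹) * (b * b⁻¹) = a * b⁻¹ := by
      calc (a * a⁻¹) * (b * b⁻¹)
          = ((a * b⁻¹) * ((a * a⁻¹) * (b * b⁻¹))) * (a * b⁻¹) := by rw [hx2, xh]
        _ = (a * b⁻¹) * ((a * a⁻¹) * (b * b⁻¹)) * (a * b⁻¹) := rfl
        _ = a * b⁻¹ := hxh
    have theta : a * (b * b⁻¹) = (a * a⁻¹) * b := by
      calc a * (b * b⁻¹) = a * (b⁻¹ * b) := by rw [mul_inv_comm]
        _ = (a * b⁻¹) * b := by rw [mul_assoc]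
        _ = ((a * a⁻¹) * (b * b⁻¹)) * b := by rw [keyx]
        _ = (a * a⁻¹) * ((b * b⁻¹) * b) := by rw [mul_assoc]
        _ = (a * a⁻¹) * b := by rw [cr_absorb_left]
    have t1 : τ a (a * (b * b⁻¹)) := by
      have := τ.mul (τ.refl a) hτ0
      rwa [cr_absorb_right] at this
    have t2 : τ ((a * a⁻¹) * b) b := by
      have := τ.mul hτ0 (τ.refl b)
      rwa [cr_absorb_left] at this
    exact τ.trans t1 (theta ▸ t2)
  · rintro ⟨hβ, hτ⟩
    refine ⟨hβ, ?_⟩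
    exact hτpure _ _ (cr_idem b) (τ.mul hτ (τ.refl b⁻¹))
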